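/- arXiv:2309.07365 — 2 statements merged into one kernel-verified Lean document; each statement's English description precedes it below -/
import Mathlib

section
/- Let (Ω, P) be a probability space with Z ∈ {0,1}, R ∈ {0,1}, X, and bounded Y(0), Y(1), with Y = Z·Y(1) + (1-Z)·Y(0). Assume Z ⊥ (Y(0), Y(1)) | X given R=1, and let e(X) = P(Z=1 | X, R=1) with 0 < δ < e(X) < 1 - δ. Then E[Z·Y·(1-e(X))/e(X) | R=1] / P(Z=0|R=1) = E[Y(1) | Z=0, R=1]. -/
/-- Weighting the treated recruited individuals by `(1-e)/e` recovers the mean treated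
potential outcome among the control recruited:
`E[Z·Y·(1-e(X))/e(X) | R=1] / P(Z=0 | R=1) = E[Y(1) | Z=0, R=1]`,
on a finite probability space, under subset ignorability and positivity. -/
theorem stmt6 {Ω 𝒳 : Type*} [Fintype Ω] [Fintype 𝒳] [DecidableEq 𝒳]
    (P : Ω → ℝ) (hP : ∀ ω, 0 ≤ P ω) (hP1 : ∑ ω, P ω = 1)
    (Z R Y0 Y1 Y : Ω → ℝ) (X : Ω → 𝒳)
    (hZ : ∀ ω, Z ω = 0 ∨ Z ω = 1) (hR : ∀ ω, R ω = 0 ∨ R ω = 1)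
    (hY : ∀ ω, Y ω = Z ω * Y1 ω + (1 - Z ω) * Y0 ω)
    (e : 𝒳 → ℝ)
    (he : ∀ x, e x * (∑ ω, P ω * R ω * (if X ω = x then (1:ℝ) else 0))
        = ∑ ω, P ω * R ω * Z ω * (if X ω = x then (1:ℝ) else 0))
    (hpos : ∃ δ > 0, ∀ x, δ < e x ∧ e x < 1 - δ)
    (hign : ∀ (x : 𝒳) (g : ℝ × ℝ → ℝ),
      (∑ ω, P ω * R ω * (if X ω = x then (1:ℝ) else 0) * Z ω * g (Y0 ω, Y1 ω)) *
        (∑ ω, P ω * R ω * (if X ω = x then (1:ℝ) else 0))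
      = (∑ ω, P ω * R ω * (if X ω = x then (1:ℝ) else 0) * Z ω) *
        (∑ ω, P ω * R ω * (if X ω = x then (1:ℝ) else 0) * g (Y0 ω, Y1 ω)))
    (hR1 : 0 < ∑ ω, P ω * R ω)
    (hZ0R1 : 0 < ∑ ω, P ω * R ω * (1 - Z ω)) :
    ((∑ ω, P ω * R ω * (Z ω * Y ω * (1 - e (X ω)) / e (X ω))) / (∑ ω, P ω * R ω)) /
        ((∑ ω, P ω * R ω * (1 - Z ω)) / (∑ ω, P ω * R ω))
      = (∑ ω, P ω * R ω * (1 - Z ω) * Y1 ω) / (∑ ω, P ω * R ω * (1 - Z ω)) := by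
  classical
  obtain ⟨δ, hδ, hδe⟩ := hpos
  have hne : ∀ x, e x ≠ 0 := fun x => ne_of_gt (hδ.trans (hδe x).1)
  have hZY : ∀ ω, Z ω * Y ω = Z ω * Y1 ω := by
    intro ω
    rcases hZ ω with h | h <;> rw [hY ω, h] <;> ring
  set W : 𝒳 → ℝ := fun x => ∑ ω, P ω * R ω * (if X ω = x then (1:ℝ) else 0) with hW
  set A : 𝒳 → ℝ := fun x => ∑ ω, P ω * R ω * (if X ω = x then (1:ℝ) else 0) * Z ω with hA
  set S : 𝒳 → ℝ := fun x =>
    ∑ ω, P ω * R ω * (if X ω = x then (1:ℝ) else 0) * Z ω * Y1 ω with hS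
  set U : 𝒳 → ℝ := fun x =>
    ∑ ω, P ω * R ω * (if X ω = x then (1:ℝ) else 0) * Y1 ω with hU
  set T : 𝒳 → ℝ := fun x =>
    ∑ ω, P ω * R ω * (if X ω = x then (1:ℝ) else 0) * (1 - Z ω) * Y1 ω with hT
  have hTUS : ∀ x, T x = U x - S x := by
    intro x
    rw [hT, hU, hS]
    simp only [← Finset.sum_sub_distrib]
    exact Finset.sum_congr rfl fun ω _ => by ring
  have heA : ∀ x, e x * W x = A x := by
    intro x
    rw [hW, hA]
    simp only
    rw [he x]
    exact Finset.sum_congr rfl fun ω _ => by ring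
  have key : ∀ x, (1 - e x) / e x * S x = T x := by
    intro x
    by_cases hAx : A x = 0
    · have hWx : W x = 0 := by
        have h := heA x
        rw [hAx] at h
        exact (mul_eq_zero.mp h).resolve_left (hne x)
      have hzero : ∀ ω, P ω * R ω * (if X ω = x then (1:ℝ) else 0) = 0 := by
        intro ω
        have hnn : ∀ ω' ∈ Finset.univ,
            (0:ℝ) ≤ P ω' * R ω' * (if X ω' = x then (1:ℝ) else 0) := by
          intro ω' _
          have hR' : (0:ℝ) ≤ R ω' := by rcases hR ω' with h|h <;> simp [h]
          have hP' := hP ω'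
          positivity
        exact (Finset.sum_eq_zero_iff_of_nonneg hnn).mp hWx ω (Finset.mem_univ ω)
      have hS0 : S x = 0 := Finset.sum_eq_zero fun ω _ => by
        have h := hzero ω
        calc P ω * R ω * (if X ω = x then (1:ℝ) else 0) * Z ω * Y1 ω
            = P ω * R ω * (if X ω = x then (1:ℝ) else 0) * (Z ω * Y1 ω) := by ring
          _ = 0 := by rw [h, zero_mul]
      have hT0 : T x = 0 := Finset.sum_eq_zero fun ω _ => by
        have h := hzero ω
        calc P ω * R ω * (if X ω = x then (1:ℝ) else 0) * (1 - Z ω) * Y1 ω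
            = P ω * R ω * (if X ω = x then (1:ℝ) else 0) * ((1 - Z ω) * Y1 ω) := by ring
          _ = 0 := by rw [h, zero_mul]
      rw [hS0, hT0, mul_zero]
    · have hig := hign x Prod.snd
      have hSW : S x * W x = A x * U x := hig
      have hSe : S x = e x * U x := by
        have h1 : S x * A x = (e x * U x) * A x := by
          calc S x * A x = e x * (S x * W x) := by rw [← heA x]; ring
            _ = e x * (A x * U x) := by rw [hSW]
            _ = (e x * U x) * A x := by ring
        exact mul_right_cancel₀ hAx h1
      rw [hTUS, hSe]
      field_simp [hne x]
  have fib : ∀ f : Ω → ℝ,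
      ∑ ω, f ω = ∑ x, ∑ ω, (if X ω = x then (1:ℝ) else 0) * f ω := by
    intro f
    rw [Finset.sum_comm]
    exact Finset.sum_congr rfl fun ω _ => by
      simp [ite_mul, Finset.sum_ite_eq]
  have Nnum : (∑ ω, P ω * R ω * (Z ω * Y ω * (1 - e (X ω)) / e (X ω)))
      = ∑ ω, P ω * R ω * (1 - Z ω) * Y1 ω := by
    rw [fib (fun ω => P ω * R ω * (Z ω * Y ω * (1 - e (X ω)) / e (X ω))),
        fib (fun ω => P ω * R ω * (1 - Z ω) * Y1 ω)]
    refine Finset.sum_congr rfl fun x _ => ?_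
    have h1 : ∑ ω, (if X ω = x then (1:ℝ) else 0) *
        (P ω * R ω * (Z ω * Y ω * (1 - e (X ω)) / e (X ω)))
        = (1 - e x) / e x * S x := by
      rw [hS, Finset.mul_sum]
      refine Finset.sum_congr rfl fun ω _ => ?_
      by_cases hx : X ω = x
      · rw [if_pos hx, hx, hZY ω]
        ring
      · simp [hx]
    have h2 : ∑ ω, (if X ω = x then (1:ℝ) else 0) * (P ω * R ω * (1 - Z ω) * Y1 ω)
        = T x := by
      rw [hT]
      exact Finset.sum_congr rfl fun ω _ => by ring
    rw [h1, h2, key x]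
  rw [Nnum]
  have h1 := hR1.ne'
  have h2 := hZ0R1.ne'
  field_simp
end

section
/- Let Z ∈ {0,1}, R ∈ {0,1}, X, Y(0), Y(1) be random variables with Z ⊥ (Y(0), Y(1)) | (X, R=1) and conditional densities well-defined. Then P(R=1 | Y(0), Y(1), X, Z=1)/P(R=1 | Y(0), Y(1), X, Z=0) = [P(Z=1|X, R=1)/P(Z=0|X, R=1)] · [P(Z=0|X, Y(0), Y(1))/P(Z=1|X, Y(0), Y(1))], assuming all probabilities are positive. In particular, if additionally Z ⊥ (Y(0), Y(1), X), this ratio is a function of X alone. -/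
/-!
On the recruited population `{R = 1}`, subset ignorability says that the odds of `Z` given
`(Y(0), Y(1), X)` equal the odds of `Z` given `X` alone. Bayes' rule turns the recruitment
ratio `P(R = 1 | Y, X, Z = 1) / P(R = 1 | Y, X, Z = 0)` into the odds of `Z` among the recruited
divided by the odds of `Z` in the whole population, which gives the decomposition. Under
randomization the population odds of `Z` given `(Y, X)` are a constant.
-/

open Finset

section IndicatorSums

variable {Ω : Type*} [Fintype Ω]

theorem sum_ite_congr_prop (P : Ω → ℝ) {p q : Ω → Prop} [DecidablePred p] [DecidablePred q]
    (h : ∀ ω, p ω ↔ q ω) :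
    ∑ ω, (if p ω then P ω else 0) = ∑ ω, if q ω then P ω else 0 :=
  sum_congr rfl fun ω _ => if_congr (h ω) rfl rfl

theorem sum_ite_le_sum_ite {P : Ω → ℝ} (hP : ∀ ω, 0 ≤ P ω) {p q : Ω → Prop} [DecidablePred p]
    [DecidablePred q] (h : ∀ ω, p ω → q ω) :
    ∑ ω, (if p ω then P ω else 0) ≤ ∑ ω, if q ω then P ω else 0 := by
  simp only [← sum_filter]
  exact sum_le_sum_of_subset_of_nonneg (monotone_filter_right _ fun ω _ => h ω) fun ω _ _ => hP ω

end IndicatorSums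

theorem div_div_div_eq_of_mul_eq {K : Type*} [Field K] {a₁ a₀ b₁ b₀ c₁ c₀ : K}
    (hb₁ : b₁ ≠ 0) (hb₀ : b₀ ≠ 0) (ha₀ : a₀ ≠ 0) (hc₀ : c₀ ≠ 0) (h : a₁ * c₀ = c₁ * a₀) :
    a₁ / b₁ / (a₀ / b₀) = c₁ / c₀ * (b₀ / b₁) := by
  field_simp
  linear_combination h

section Recruitment

variable {Ω 𝒴 𝒳 : Type*} [Fintype Ω] [DecidableEq 𝒴] [DecidableEq 𝒳]

def SubsetIgnorable (P : Ω → ℝ) (Z R : Ω → Bool) (Y0 Y1 : Ω → 𝒴) (X : Ω → 𝒳) : Prop :=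
  ∀ (z : Bool) (y0 y1 : 𝒴) (x : 𝒳),
    (∑ ω, if Z ω = z ∧ Y0 ω = y0 ∧ Y1 ω = y1 ∧ X ω = x ∧ R ω = true then P ω else 0) *
        (∑ ω, if X ω = x ∧ R ω = true then P ω else 0)
      = (∑ ω, if Z ω = z ∧ X ω = x ∧ R ω = true then P ω else 0) *
        (∑ ω, if Y0 ω = y0 ∧ Y1 ω = y1 ∧ X ω = x ∧ R ω = true then P ω else 0)

def Randomized (P : Ω → ℝ) (Z : Ω → Bool) (Y0 Y1 : Ω → 𝒴) (X : Ω → 𝒳) : Prop :=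
  ∀ (z : Bool) (y0 y1 : 𝒴) (x : 𝒳),
    (∑ ω, if Z ω = z ∧ Y0 ω = y0 ∧ Y1 ω = y1 ∧ X ω = x then P ω else 0)
      = (∑ ω, if Z ω = z then P ω else 0) *
        (∑ ω, if Y0 ω = y0 ∧ Y1 ω = y1 ∧ X ω = x then P ω else 0)

variable {P : Ω → ℝ} {Z R : Ω → Bool} {Y0 Y1 : Ω → 𝒴} {X : Ω → 𝒳}

theorem SubsetIgnorable.recruited_odds_eq (hP : ∀ ω, 0 ≤ P ω) (hSI : SubsetIgnorable P Z R Y0 Y1 X)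
    {z z' : Bool} {y0 y1 : 𝒴} {x : 𝒳}
    (hpos : 0 < ∑ ω, if Z ω = z' ∧ Y0 ω = y0 ∧ Y1 ω = y1 ∧ X ω = x ∧ R ω = true then P ω else 0) :
    (∑ ω, if Z ω = z ∧ Y0 ω = y0 ∧ Y1 ω = y1 ∧ X ω = x ∧ R ω = true then P ω else 0) *
        (∑ ω, if Z ω = z' ∧ X ω = x ∧ R ω = true then P ω else 0)
      = (∑ ω, if Z ω = z ∧ X ω = x ∧ R ω = true then P ω else 0) *
        (∑ ω, if Z ω = z' ∧ Y0 ω = y0 ∧ Y1 ω = y1 ∧ X ω = x ∧ R ω = true then P ω else 0) := by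
  have hrecruited : 0 < ∑ ω, if X ω = x ∧ R ω = true then P ω else 0 :=
    hpos.trans_le (sum_ite_le_sum_ite hP fun ω => by tauto)
  refine mul_right_cancel₀ hrecruited.ne' ?_
  linear_combination
    (∑ ω, if Z ω = z' ∧ X ω = x ∧ R ω = true then P ω else 0) * hSI z y0 y1 x -
      (∑ ω, if Z ω = z ∧ X ω = x ∧ R ω = true then P ω else 0) * hSI z' y0 y1 x

theorem SubsetIgnorable.recruitment_ratio_eq (hP : ∀ ω, 0 ≤ P ω)
    (hSI : SubsetIgnorable P Z R Y0 Y1 X) {y0 y1 : 𝒴} {x : 𝒳}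
    (hB₁ : 0 < ∑ ω, if Z ω = true ∧ Y0 ω = y0 ∧ Y1 ω = y1 ∧ X ω = x then P ω else 0)
    (hB₀ : 0 < ∑ ω, if Z ω = false ∧ Y0 ω = y0 ∧ Y1 ω = y1 ∧ X ω = x then P ω else 0)
    (hA₀ : 0 < ∑ ω, if Z ω = false ∧ Y0 ω = y0 ∧ Y1 ω = y1 ∧ X ω = x ∧ R ω = true then P ω else 0)
    (hC₀ : 0 < ∑ ω, if Z ω = false ∧ X ω = x ∧ R ω = true then P ω else 0) :
    ((∑ ω, if R ω = true ∧ Y0 ω = y0 ∧ Y1 ω = y1 ∧ X ω = x ∧ Z ω = true then P ω else 0) /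
        (∑ ω, if Y0 ω = y0 ∧ Y1 ω = y1 ∧ X ω = x ∧ Z ω = true then P ω else 0)) /
      ((∑ ω, if R ω = true ∧ Y0 ω = y0 ∧ Y1 ω = y1 ∧ X ω = x ∧ Z ω = false then P ω else 0) /
        (∑ ω, if Y0 ω = y0 ∧ Y1 ω = y1 ∧ X ω = x ∧ Z ω = false then P ω else 0))
      = ((∑ ω, if Z ω = true ∧ X ω = x ∧ R ω = true then P ω else 0) /
          (∑ ω, if Z ω = false ∧ X ω = x ∧ R ω = true then P ω else 0)) *
        ((∑ ω, if Z ω = false ∧ Y0 ω = y0 ∧ Y1 ω = y1 ∧ X ω = x then P ω else 0) /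
          (∑ ω, if Z ω = true ∧ Y0 ω = y0 ∧ Y1 ω = y1 ∧ X ω = x then P ω else 0)) := by
  convert div_div_div_eq_of_mul_eq hB₁.ne' hB₀.ne' hA₀.ne' hC₀.ne'
    (hSI.recruited_odds_eq hP hA₀) using 3 <;> exact sum_ite_congr_prop P fun ω => by tauto

theorem SubsetIgnorable.exists_recruitment_ratio_eq_of_randomized (hP : ∀ ω, 0 ≤ P ω)
    (hSI : SubsetIgnorable P Z R Y0 Y1 X) (hrand : Randomized P Z Y0 Y1 X) :
    ∃ d : 𝒳 → ℝ, ∀ (y0 y1 : 𝒴) (x : 𝒳),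
      (0 < ∑ ω, if Y0 ω = y0 ∧ Y1 ω = y1 ∧ X ω = x ∧ Z ω = true then P ω else 0) →
      (0 < ∑ ω, if Y0 ω = y0 ∧ Y1 ω = y1 ∧ X ω = x ∧ Z ω = false then P ω else 0) →
      (0 < ∑ ω, if R ω = true ∧ Y0 ω = y0 ∧ Y1 ω = y1 ∧ X ω = x ∧ Z ω = false then P ω else 0) →
      ((∑ ω, if R ω = true ∧ Y0 ω = y0 ∧ Y1 ω = y1 ∧ X ω = x ∧ Z ω = true then P ω else 0) /
          (∑ ω, if Y0 ω = y0 ∧ Y1 ω = y1 ∧ X ω = x ∧ Z ω = true then P ω else 0)) /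
        ((∑ ω, if R ω = true ∧ Y0 ω = y0 ∧ Y1 ω = y1 ∧ X ω = x ∧ Z ω = false then P ω else 0) /
          (∑ ω, if Y0 ω = y0 ∧ Y1 ω = y1 ∧ X ω = x ∧ Z ω = false then P ω else 0)) = d x := by
  refine ⟨fun x => ((∑ ω, if Z ω = true ∧ X ω = x ∧ R ω = true then P ω else 0) /
      (∑ ω, if Z ω = false ∧ X ω = x ∧ R ω = true then P ω else 0)) *
    ((∑ ω, if Z ω = false then P ω else 0) / (∑ ω, if Z ω = true then P ω else 0)),
    fun y0 y1 x hB₁ hB₀ hA₀ => ?_⟩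
  have hA₀' : 0 < ∑ ω,
      if Z ω = false ∧ Y0 ω = y0 ∧ Y1 ω = y1 ∧ X ω = x ∧ R ω = true then P ω else 0 :=
    hA₀.trans_eq (sum_ite_congr_prop P fun ω => by tauto)
  have hB₁' : 0 < ∑ ω, if Z ω = true ∧ Y0 ω = y0 ∧ Y1 ω = y1 ∧ X ω = x then P ω else 0 :=
    hB₁.trans_eq (sum_ite_congr_prop P fun ω => by tauto)
  have hB₀' : 0 < ∑ ω, if Z ω = false ∧ Y0 ω = y0 ∧ Y1 ω = y1 ∧ X ω = x then P ω else 0 :=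
    hB₀.trans_eq (sum_ite_congr_prop P fun ω => by tauto)
  have hC₀ : 0 < ∑ ω, if Z ω = false ∧ X ω = x ∧ R ω = true then P ω else 0 :=
    hA₀'.trans_le (sum_ite_le_sum_ite hP fun ω => by tauto)
  rw [hSI.recruitment_ratio_eq hP hB₁' hB₀' hA₀' hC₀, hrand true, hrand false,
    mul_div_mul_right _ _ (right_ne_zero_of_mul (hrand true y0 y1 x ▸ hB₁'.ne'))]

end Recruitment

theorem stmt16_general {Ω 𝒴 𝒳 : Type*} [Fintype Ω] [DecidableEq 𝒴] [DecidableEq 𝒳]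
    (P : Ω → ℝ) (hP : ∀ ω, 0 ≤ P ω)
    (Z R : Ω → Bool) (Y0 Y1 : Ω → 𝒴) (X : Ω → 𝒳)
    -- subset ignorability: Z ⊥ (Y0, Y1) | X on {R = 1}, in cross-multiplied form
    (hSI : ∀ (z : Bool) (y0 y1 : 𝒴) (x : 𝒳),
      (∑ ω, if Z ω = z ∧ Y0 ω = y0 ∧ Y1 ω = y1 ∧ X ω = x ∧ R ω = true then P ω else 0) *
        (∑ ω, if X ω = x ∧ R ω = true then P ω else 0)
      = (∑ ω, if Z ω = z ∧ X ω = x ∧ R ω = true then P ω else 0) *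
        (∑ ω, if Y0 ω = y0 ∧ Y1 ω = y1 ∧ X ω = x ∧ R ω = true then P ω else 0)) :
    (∀ (y0 y1 : 𝒴) (x : 𝒳),
      (0 < ∑ ω, if Z ω = true ∧ Y0 ω = y0 ∧ Y1 ω = y1 ∧ X ω = x then P ω else 0) →
      (0 < ∑ ω, if Z ω = false ∧ Y0 ω = y0 ∧ Y1 ω = y1 ∧ X ω = x then P ω else 0) →
      (0 < ∑ ω, if Z ω = false ∧ Y0 ω = y0 ∧ Y1 ω = y1 ∧ X ω = x ∧ R ω = true then P ω else 0) →
      (0 < ∑ ω, if Z ω = true ∧ X ω = x ∧ R ω = true then P ω else 0) →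
      (0 < ∑ ω, if Z ω = false ∧ X ω = x ∧ R ω = true then P ω else 0) →
      ((∑ ω, if R ω = true ∧ Y0 ω = y0 ∧ Y1 ω = y1 ∧ X ω = x ∧ Z ω = true then P ω else 0) /
        (∑ ω, if Y0 ω = y0 ∧ Y1 ω = y1 ∧ X ω = x ∧ Z ω = true then P ω else 0)) /
      ((∑ ω, if R ω = true ∧ Y0 ω = y0 ∧ Y1 ω = y1 ∧ X ω = x ∧ Z ω = false then P ω else 0) /
        (∑ ω, if Y0 ω = y0 ∧ Y1 ω = y1 ∧ X ω = x ∧ Z ω = false then P ω else 0))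
      = ((∑ ω, if Z ω = true ∧ X ω = x ∧ R ω = true then P ω else 0) /
          (∑ ω, if Z ω = false ∧ X ω = x ∧ R ω = true then P ω else 0)) *
        ((∑ ω, if Z ω = false ∧ Y0 ω = y0 ∧ Y1 ω = y1 ∧ X ω = x then P ω else 0) /
          (∑ ω, if Z ω = true ∧ Y0 ω = y0 ∧ Y1 ω = y1 ∧ X ω = x then P ω else 0)))
    ∧
    ((∀ (z : Bool) (y0 y1 : 𝒴) (x : 𝒳),
        (∑ ω, if Z ω = z ∧ Y0 ω = y0 ∧ Y1 ω = y1 ∧ X ω = x then P ω else 0)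
          = (∑ ω, if Z ω = z then P ω else 0) *
            (∑ ω, if Y0 ω = y0 ∧ Y1 ω = y1 ∧ X ω = x then P ω else 0)) →
      ∃ d : 𝒳 → ℝ, ∀ (y0 y1 : 𝒴) (x : 𝒳),
        (0 < ∑ ω, if Y0 ω = y0 ∧ Y1 ω = y1 ∧ X ω = x ∧ Z ω = true then P ω else 0) →
        (0 < ∑ ω, if Y0 ω = y0 ∧ Y1 ω = y1 ∧ X ω = x ∧ Z ω = false then P ω else 0) →
        (0 < ∑ ω, if R ω = true ∧ Y0 ω = y0 ∧ Y1 ω = y1 ∧ X ω = x ∧ Z ω = false then P ω else 0) →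
        ((∑ ω, if R ω = true ∧ Y0 ω = y0 ∧ Y1 ω = y1 ∧ X ω = x ∧ Z ω = true then P ω else 0) /
          (∑ ω, if Y0 ω = y0 ∧ Y1 ω = y1 ∧ X ω = x ∧ Z ω = true then P ω else 0)) /
        ((∑ ω, if R ω = true ∧ Y0 ω = y0 ∧ Y1 ω = y1 ∧ X ω = x ∧ Z ω = false then P ω else 0) /
          (∑ ω, if Y0 ω = y0 ∧ Y1 ω = y1 ∧ X ω = x ∧ Z ω = false then P ω else 0)) = d x) := by
  exact ⟨fun _ _ _ hB₁ hB₀ hA₀ _ hC₀ => SubsetIgnorable.recruitment_ratio_eq hP hSI hB₁ hB₀ hA₀ hC₀,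
    SubsetIgnorable.exists_recruitment_ratio_eq_of_randomized hP hSI⟩

/-- Subset ignorability implies the recruitment probability ratio decomposes as
`P(R=1|Y,X,Z=1)/P(R=1|Y,X,Z=0)
  = [P(Z=1|X,R=1)/P(Z=0|X,R=1)] · [P(Z=0|X,Y)/P(Z=1|X,Y)]`;
and if in addition `Z ⊥ (Y(0), Y(1), X)`, the ratio is a function of `X` alone. -/
theorem stmt16 {Ω 𝒴 𝒳 : Type*} [Fintype Ω] [DecidableEq 𝒴] [DecidableEq 𝒳]
    (P : Ω → ℝ) (hP : ∀ ω, 0 ≤ P ω) (hP1 : ∑ ω, P ω = 1)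
    (Z R : Ω → Bool) (Y0 Y1 : Ω → 𝒴) (X : Ω → 𝒳)
    -- subset ignorability: Z ⊥ (Y0, Y1) | X on {R = 1}, in cross-multiplied form
    (hSI : ∀ (z : Bool) (y0 y1 : 𝒴) (x : 𝒳),
      (∑ ω, if Z ω = z ∧ Y0 ω = y0 ∧ Y1 ω = y1 ∧ X ω = x ∧ R ω = true then P ω else 0) *
        (∑ ω, if X ω = x ∧ R ω = true then P ω else 0)
      = (∑ ω, if Z ω = z ∧ X ω = x ∧ R ω = true then P ω else 0) *
        (∑ ω, if Y0 ω = y0 ∧ Y1 ω = y1 ∧ X ω = x ∧ R ω = true then P ω else 0)) :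
    (∀ (y0 y1 : 𝒴) (x : 𝒳),
      (0 < ∑ ω, if Z ω = true ∧ Y0 ω = y0 ∧ Y1 ω = y1 ∧ X ω = x then P ω else 0) →
      (0 < ∑ ω, if Z ω = false ∧ Y0 ω = y0 ∧ Y1 ω = y1 ∧ X ω = x then P ω else 0) →
      (0 < ∑ ω, if Z ω = false ∧ Y0 ω = y0 ∧ Y1 ω = y1 ∧ X ω = x ∧ R ω = true then P ω else 0) →
      (0 < ∑ ω, if Z ω = true ∧ X ω = x ∧ R ω = true then P ω else 0) →
      (0 < ∑ ω, if Z ω = false ∧ X ω = x ∧ R ω = true then P ω else 0) →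
      ((∑ ω, if R ω = true ∧ Y0 ω = y0 ∧ Y1 ω = y1 ∧ X ω = x ∧ Z ω = true then P ω else 0) /
        (∑ ω, if Y0 ω = y0 ∧ Y1 ω = y1 ∧ X ω = x ∧ Z ω = true then P ω else 0)) /
      ((∑ ω, if R ω = true ∧ Y0 ω = y0 ∧ Y1 ω = y1 ∧ X ω = x ∧ Z ω = false then P ω else 0) /
        (∑ ω, if Y0 ω = y0 ∧ Y1 ω = y1 ∧ X ω = x ∧ Z ω = false then P ω else 0))
      = ((∑ ω, if Z ω = true ∧ X ω = x ∧ R ω = true then P ω else 0) /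
          (∑ ω, if Z ω = false ∧ X ω = x ∧ R ω = true then P ω else 0)) *
        ((∑ ω, if Z ω = false ∧ Y0 ω = y0 ∧ Y1 ω = y1 ∧ X ω = x then P ω else 0) /
          (∑ ω, if Z ω = true ∧ Y0 ω = y0 ∧ Y1 ω = y1 ∧ X ω = x then P ω else 0)))
    ∧
    ((∀ (z : Bool) (y0 y1 : 𝒴) (x : 𝒳),
        (∑ ω, if Z ω = z ∧ Y0 ω = y0 ∧ Y1 ω = y1 ∧ X ω = x then P ω else 0)
          = (∑ ω, if Z ω = z then P ω else 0) *
            (∑ ω, if Y0 ω = y0 ∧ Y1 ω = y1 ∧ X ω = x then P ω else 0)) →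
      ∃ d : 𝒳 → ℝ, ∀ (y0 y1 : 𝒴) (x : 𝒳),
        (0 < ∑ ω, if Y0 ω = y0 ∧ Y1 ω = y1 ∧ X ω = x ∧ Z ω = true then P ω else 0) →
        (0 < ∑ ω, if Y0 ω = y0 ∧ Y1 ω = y1 ∧ X ω = x ∧ Z ω = false then P ω else 0) →
        (0 < ∑ ω, if R ω = true ∧ Y0 ω = y0 ∧ Y1 ω = y1 ∧ X ω = x ∧ Z ω = false then P ω else 0) →
        ((∑ ω, if R ω = true ∧ Y0 ω = y0 ∧ Y1 ω = y1 ∧ X ω = x ∧ Z ω = true then P ω else 0) /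
          (∑ ω, if Y0 ω = y0 ∧ Y1 ω = y1 ∧ X ω = x ∧ Z ω = true then P ω else 0)) /
        ((∑ ω, if R ω = true ∧ Y0 ω = y0 ∧ Y1 ω = y1 ∧ X ω = x ∧ Z ω = false then P ω else 0) /
          (∑ ω, if Y0 ω = y0 ∧ Y1 ω = y1 ∧ X ω = x ∧ Z ω = false then P ω else 0)) = d x) :=
  stmt16_general P hP Z R Y0 Y1 X hSI
end
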